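/- arXiv:1903.11384 — 7 statements merged into one kernel-verified Lean document; each statement's English description precedes it below -/
import Mathlib

section
/- Define Euler's difference table entries e_k^j for 0 ≤ j ≤ k by e_j^j = j! and e_k^j = e_k^{j+1} - e_{k-1}^j. Then e_k^0 = d_k, the number of derangements of a k-element set. -/
/-- Euler's difference table: `eulerE j j = j!` and `eulerE k j = eulerE k (j+1) - eulerE (k-1) j`. -/
def eulerE : ℕ → ℕ → ℤ
  | k, j =>
    if _h : k ≤ j then (Nat.factorial k : ℤ)
    else eulerE k (j + 1) - eulerE (k - 1) j
  termination_by k j => k - j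
  decreasing_by all_goals omega

/-!
Along the diagonal `k - j = m` the recurrence reads `e_{j+m+1}^j = e_{j+m+1}^{j+1} - e_{j+m}^j`,
so the `m`-th diagonal of the table is the `m`-th forward difference of `n ↦ n!`. Expanding
`Δ^k (n ↦ n!)` at `0` gives `∑ (-1)^(k-i) C(k,i) i! = ∑ (-1)^(k-i) k!/(k-i)!`, the
inclusion–exclusion count of derangements.
-/

open Finset Nat fwdDiff

theorem eulerE_add_eq_fwdDiff_iter_factorial (m j : ℕ) :
    eulerE (j + m) j = (Δ_[1])^[m] (fun n : ℕ ↦ (n ! : ℤ)) j := by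
  induction m generalizing j with
  | zero => rw [eulerE]; simp
  | succ m ih =>
    rw [eulerE, dif_neg (by omega), Function.iterate_succ_apply', fwdDiff, ← ih, ← ih,
      show j + (m + 1) - 1 = j + m by omega, show j + (m + 1) = j + 1 + m by omega]

theorem numDerangements_eq_sum_descFactorial (k : ℕ) :
    (numDerangements k : ℤ) = ∑ i ∈ range (k + 1), (-1 : ℤ) ^ (k - i) * k.descFactorial i := by
  rw [numDerangements_sum, ← sum_range_reflect]
  refine sum_congr rfl fun i hi ↦ ?_
  have hik : i ≤ k := mem_range_succ_iff.mp hi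
  rw [add_tsub_cancel_right, ← add_descFactorial_eq_ascFactorial, Nat.sub_sub_self hik,
    Nat.sub_add_cancel hik]

theorem fwdDiff_iter_factorial_zero (k : ℕ) :
    (Δ_[1])^[k] (fun n : ℕ ↦ (n ! : ℤ)) 0 = numDerangements k := by
  rw [fwdDiff_iter_eq_sum_shift, numDerangements_eq_sum_descFactorial]
  refine sum_congr rfl fun i _ ↦ ?_
  rw [descFactorial_eq_factorial_mul_choose, zero_add, smul_one_eq_cast, zsmul_eq_mul]
  push_cast
  ring

theorem eulerE_zero_eq_numDerangements (k : ℕ) :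
    eulerE k 0 = (numDerangements k : ℤ) := by
  simpa using (eulerE_add_eq_fwdDiff_iter_factorial k 0).trans (fwdDiff_iter_factorial_zero k)
end

section
/- Every entry e_k^j of Euler's difference table is divisible by j!. -/
open Nat

lemma eulerE_of_le {k j : ℕ} (h : k ≤ j) : eulerE k j = (k ! : ℤ) := by
  rw [eulerE, dif_pos h]

lemma eulerE_of_lt {k j : ℕ} (h : j < k) :
    eulerE k j = eulerE k (j + 1) - eulerE (k - 1) j := by
  rw [eulerE, dif_neg (not_le.mpr h)]

theorem factorial_dvd_eulerE (k j : ℕ) (h : j ≤ k) :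
    (Nat.factorial j : ℤ) ∣ eulerE k j := by
  induction k generalizing j with
  | zero =>
    obtain rfl : j = 0 := Nat.le_zero.mp h
    rw [eulerE_of_le le_rfl]
  | succ k ih_row =>
    induction h using Nat.decreasingInduction with
    | self => rw [eulerE_of_le le_rfl]
    | of_succ j hj ih_col =>
      rw [eulerE_of_lt hj]
      have h_fact : (j ! : ℤ) ∣ ((j + 1)! : ℤ) :=
        Int.natCast_dvd_natCast.mpr (factorial_dvd_factorial j.le_succ)
      exact dvd_sub (h_fact.trans ih_col) (ih_row j (by omega))
end

section
/- The higher derangement numbers admit the closed form d_n^k = (1/k!) ∑_{j=0}^k C(k,j) d_{n-j}, where d_m is the number of derangements of an m-element set. -/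
/-- Higher derangement numbers `dTab n k = eulerE n k / k!` (as rationals). -/
noncomputable def dTab (n k : ℕ) : ℚ := (eulerE n k : ℚ) / (Nat.factorial k : ℚ)

open Finset
noncomputable def Ssum (m : ℕ) : ℤ := ∑ j ∈ range (m+1), (m.choose j : ℤ) * numDerangements (m - j)
noncomputable def Tsum (m : ℕ) : ℤ := ∑ j ∈ range (m+1), (m.choose j : ℤ) * numDerangements (m - j + 1)

lemma alt_rev (m : ℕ) :
    (∑ j ∈ range (m+2), ((m+1).choose j : ℤ) * (-1)^(m+1-j)) = 0 := by
  rw [← Finset.sum_range_reflect]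
  have : ∀ j ∈ range (m+2), (((m+1).choose (m+2-1-j) : ℤ)) * (-1)^(m+1-(m+2-1-j))
      = (-1)^j * ((m+1).choose j : ℤ) := by
    intro j hj
    rw [mem_range] at hj
    have h1 : m + 2 - 1 - j = m + 1 - j := by omega
    have h2 : m + 1 - (m + 1 - j) = j := by omega
    rw [h1, h2, Nat.choose_symm (by omega)]
    ring
  rw [Finset.sum_congr rfl this]
  exact Int.alternating_sum_range_choose_of_ne (by omega)

lemma Ssum_succ (m : ℕ) : Ssum (m+1) = Tsum m + Ssum m := by
  have h := Finset.sum_choose_succ_mul (R := ℤ)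
    (fun i _ => (numDerangements (m + 1 - i) : ℤ)) m
  unfold Ssum Tsum
  rw [h]
  congr 1
  · apply Finset.sum_congr rfl
    intro j hj
    rw [mem_range] at hj
    have : m + 1 - j = m - j + 1 := by omega
    rw [this]
  · apply Finset.sum_congr rfl
    intro j hj
    have : m + 1 - (j + 1) = m - j := by omega
    rw [this]

lemma Tsum_succ (m : ℕ) : Tsum (m+1) = Ssum (m+1) + (m+1) * Tsum m := by
  unfold Tsum
  have step : ∀ j ∈ range (m+2), ((m+1).choose j : ℤ) * numDerangements (m + 1 - j + 1)
      = ((m+1).choose j : ℤ) * ((m+1-j : ℕ)+1) * numDerangements (m+1-j)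
        - ((m+1).choose j : ℤ) * (-1)^(m+1-j) := by
    intro j hj
    have := numDerangements_succ (m + 1 - j)
    rw [this]; ring
  rw [Finset.sum_congr rfl step, Finset.sum_sub_distrib]
  rw [show (∑ j ∈ range (m+2), ((m+1).choose j : ℤ) * (-1)^(m+1-j)) = 0 from alt_rev m]
  rw [sub_zero]
  have split : ∀ j ∈ range (m+2), ((m+1).choose j : ℤ) * ((m+1-j : ℕ)+1) * numDerangements (m+1-j)
      = ((m+1).choose j : ℤ) * numDerangements (m+1-j)
        + (((m+1).choose j : ℤ) * ((m+1-j : ℕ))) * numDerangements (m+1-j) := by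
    intro j hj; ring
  rw [Finset.sum_congr rfl split, Finset.sum_add_distrib]
  congr 1
  · -- ∑_{j∈range(m+2)} C(m+1,j)(m+1-j) D(m+1-j) = (m+1) Tsum m
    have key : ∀ j ∈ range (m+1), (((m+1).choose j : ℤ) * ((m+1-j : ℕ)))
        = (m+1) * (m.choose j : ℤ) := by
      intro j hj
      rw [mem_range] at hj
      have h1 : (m+1).choose j * (m+1-j) = (m+1).choose (j+1) * (j+1) :=
        (Nat.choose_succ_right_eq (m+1) j).symm
      have h2 : (m+1) * m.choose j = (m+1).choose (j+1) * (j+1) :=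
        Nat.add_one_mul_choose_eq m j
      have : (m+1).choose j * (m+1-j) = (m+1) * m.choose j := by rw [h1, h2]
      exact_mod_cast congrArg (Nat.cast : ℕ → ℤ) this
    rw [Finset.sum_range_succ]
    simp only [Nat.sub_self, Nat.cast_zero, mul_zero, zero_mul, add_zero]
    rw [Finset.sum_congr rfl (fun j hj => by rw [key j hj])]
    rw [Finset.mul_sum]
    apply Finset.sum_congr rfl
    intro j hj
    rw [mem_range] at hj
    have : m + 1 - j = m - j + 1 := by omega
    rw [this]; ring

lemma Ssum_Tsum : ∀ m, Ssum m = m.factorial ∧ Tsum m = m * m.factorial := by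
  intro m
  induction m with
  | zero =>
    constructor <;> simp [Ssum, Tsum]
  | succ m ih =>
    obtain ⟨hS, hT⟩ := ih
    have hS1 : Ssum (m+1) = (m+1).factorial := by
      rw [Ssum_succ, hS, hT, Nat.factorial_succ]; push_cast; ring
    refine ⟨hS1, ?_⟩
    rw [Tsum_succ, hS1, hT, Nat.factorial_succ]; push_cast; ring

lemma key : ∀ d n k, n = k + d →
    eulerE n k = ∑ j ∈ range (k+1), (k.choose j : ℤ) * numDerangements (n - j) := by
  intro d
  induction d with
  | zero =>
    intro n k h
    have hk : n = k := by omega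
    rw [hk]
    rw [eulerE]
    simp only [le_refl, dif_pos]
    have := (Ssum_Tsum k).1
    unfold Ssum at this
    omega
  | succ d ih =>
    intro n k h
    rw [eulerE]
    rw [dif_neg (by omega)]
    rw [ih n (k+1) (by omega), ih (n-1) k (by omega)]
    have hch := Finset.sum_choose_succ_mul (R := ℤ)
      (fun i _ => (numDerangements (n - i) : ℤ)) k
    rw [hch]
    have : ∀ j ∈ range (k+1), ((k.choose j : ℤ)) * numDerangements (n - (j+1))
        = ((k.choose j : ℤ)) * numDerangements (n - 1 - j) := by
      intro j hj
      have : n - (j+1) = n - 1 - j := by omega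
      rw [this]
    rw [Finset.sum_congr rfl this]
    ring

theorem dTab_closed_form (n k : ℕ) (hkn : k ≤ n) :
    dTab n k = (1 / (Nat.factorial k : ℚ)) *
      ∑ j ∈ Finset.range (k + 1),
        (Nat.choose k j : ℚ) * (numDerangements (n - j) : ℚ) := by
  rw [dTab, key (n - k) n k (by omega)]
  push_cast
  ring
end

section
/- Equivalently, Euler's difference table entries satisfy e_n^k = ∑_{j=0}^k C(k,j) d_{n-j} for 0 ≤ k ≤ n, where d_m is the m-th derangement number. -/
open Finset in

lemma myST (n : ℕ) :
    (∑ j ∈ range (n+1), (n.choose j : ℤ) * numDerangements j) = n.factorial ∧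
    (∑ j ∈ range (n+1), (n.choose j : ℤ) * numDerangements (j+1)) = n * n.factorial := by
  induction n with
  | zero => simp
  | succ n ih =>
    obtain ⟨hS, hT⟩ := ih
    have hS' : (∑ j ∈ range (n+2), ((n+1).choose j : ℤ) * numDerangements j)
        = (n+1).factorial := by
      rw [Finset.sum_range_succ' _ (n+1)]
      have : ∀ j ∈ range (n+1), ((n+1).choose (j+1) : ℤ) * numDerangements (j+1)
          = (n.choose j : ℤ) * numDerangements (j+1)
            + (n.choose (j+1) : ℤ) * numDerangements (j+1) := by
        intro j _
        rw [Nat.choose_succ_succ]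
        push_cast
        ring
      push_cast
      rw [Finset.sum_congr rfl this, Finset.sum_add_distrib, hT]
      have h2 : (∑ j ∈ range (n+1), (n.choose (j+1) : ℤ) * numDerangements (j+1))
          = n.factorial - 1 := by
        have h3 := Finset.sum_range_succ' (fun j => (n.choose j : ℤ) * numDerangements j) n
        rw [hS] at h3
        have hz : (n.choose (n+1) : ℤ) * numDerangements (n+1) = 0 := by
          simp [Nat.choose_succ_self]
        rw [Finset.sum_range_succ, hz, add_zero]
        simp only [Nat.choose_zero_right, numDerangements_zero] at h3
        push_cast at h3 ⊢
        linarith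
      rw [h2]
      simp [Nat.factorial_succ]
      push_cast
      ring
    refine ⟨hS', ?_⟩
    have key : ∀ j ∈ range (n+2), ((n+1).choose j : ℤ) * numDerangements (j+1)
        = ((j:ℤ)+1) * (n+1).choose j * numDerangements j
          - (-1)^j * (n+1).choose j := by
      intro j _
      rw [numDerangements_succ]
      push_cast
      ring
    rw [Finset.sum_congr rfl key, Finset.sum_sub_distrib]
    have halt : (∑ j ∈ range (n+2), (-1:ℤ)^j * (n+1).choose j) = 0 :=
      Int.alternating_sum_range_choose_of_ne (Nat.succ_ne_zero n)
    rw [halt, sub_zero]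
    have hA : (∑ j ∈ range (n+2), ((j:ℤ)+1) * (n+1).choose j * numDerangements j)
        = (n+1) * (n * n.factorial) + (n+1).factorial := by
      rw [Finset.sum_range_succ' _ (n+1)]
      have : ∀ j ∈ range (n+1), ((j:ℤ)+1+1) * (n+1).choose (j+1) * numDerangements (j+1)
          = (n+1) * ((n.choose j : ℤ) * numDerangements (j+1))
            + ((n+1).choose (j+1) : ℤ) * numDerangements (j+1) := by
        intro j _
        have h := Nat.add_one_mul_choose_eq n j
        have h' : ((n:ℤ)+1) * n.choose j = (n+1).choose (j+1) * ((j:ℤ)+1) := by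
          exact_mod_cast h
        push_cast
        nlinarith [h']
      push_cast
      rw [Finset.sum_congr rfl this, Finset.sum_add_distrib, ← Finset.mul_sum, hT]
      have h2 : (∑ j ∈ range (n+1), ((n+1).choose (j+1) : ℤ) * numDerangements (j+1))
          = (n+1).factorial - 1 := by
        have := Finset.sum_range_succ' (fun j => ((n+1).choose j : ℤ) * numDerangements j) (n+1)
        rw [hS'] at this
        simp only [Nat.choose_zero_right, numDerangements_zero] at this
        push_cast at this ⊢
        linarith
      rw [h2]
      simp only [Nat.choose_zero_right, numDerangements_zero]
      push_cast
      ring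
    rw [hA]
    rw [Nat.factorial_succ]
    push_cast
    ring

open Finset in
lemma mydiag (n : ℕ) :
    (∑ j ∈ Finset.range (n + 1), (n.choose j : ℤ) * numDerangements (n - j))
      = n.factorial := by
  have h := Finset.sum_range_reflect (fun j => (n.choose j : ℤ) * numDerangements j) (n+1)
  simp only [Nat.add_sub_cancel] at h
  rw [(myST n).1] at h
  rw [← h]
  refine Finset.sum_congr rfl fun j hj => ?_
  have hj' : j ≤ n := by simpa [Nat.lt_succ_iff] using hj
  rw [Nat.choose_symm hj']

open Finset in
theorem eulerE_eq_sum_derangements (n k : ℕ) (hkn : k ≤ n) :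
    eulerE n k =
      ∑ j ∈ Finset.range (k + 1),
        (Nat.choose k j : ℤ) * (numDerangements (n - j) : ℤ) := by
  have H : ∀ m n k : ℕ, n + (n - k) ≤ m → k ≤ n → eulerE n k =
      ∑ j ∈ Finset.range (k + 1),
        (Nat.choose k j : ℤ) * (numDerangements (n - j) : ℤ) := by
    intro m
    induction m with
    | zero =>
      intro n k h1 h2
      have hn : n = 0 := by omega
      have hk : k = 0 := by omega
      subst hn; subst hk
      simp [eulerE]
    | succ m ih =>
      intro n k h1 h2
      rcases eq_or_lt_of_le h2 with h | h
      · subst h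
        rw [eulerE]
        rw [dif_pos le_rfl]
        exact (mydiag k).symm
      · rw [eulerE, dif_neg (by omega)]
        rw [ih n (k+1) (by omega) (by omega), ih (n-1) k (by omega) (by omega)]
        rw [Finset.sum_range_succ' (fun j => ((k+1).choose j : ℤ) * numDerangements (n - j)) (k+1)]
        have e1 : ∀ j ∈ range (k+1), ((k+1).choose (j+1) : ℤ) * numDerangements (n - (j+1))
            = (k.choose j : ℤ) * numDerangements (n - 1 - j)
              + (k.choose (j+1) : ℤ) * numDerangements (n - (j+1)) := by
          intro j hj
          rw [Nat.choose_succ_succ]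
          have : n - (j+1) = n - 1 - j := by omega
          rw [this]
          push_cast
          ring
        rw [Finset.sum_congr rfl e1, Finset.sum_add_distrib]
        have e2 : (∑ j ∈ range (k+1), (k.choose (j+1) : ℤ) * numDerangements (n - (j+1)))
            + ((k+1).choose 0 : ℤ) * numDerangements (n - 0)
            = ∑ j ∈ range (k+1), (k.choose j : ℤ) * numDerangements (n - j) := by
          have := Finset.sum_range_succ' (fun j => (k.choose j : ℤ) * numDerangements (n - j)) (k+1)
          rw [Finset.sum_range_succ, Nat.choose_succ_self] at this
          simp only [Nat.choose_zero_right, Nat.cast_ofNat, Int.cast_ofNat_Int,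
            Nat.cast_zero, CharP.cast_eq_zero, zero_mul, add_zero, Nat.cast_one] at this ⊢
          linarith
        push_cast at e2 ⊢
        linarith
  exact H (n + (n - k)) n k le_rfl hkn
end

section
/- The exponential generating function identity ∑_{n=0}^∞ (d_{n+k}^k / n!) x^n = e^{-x}/(1-x)^{k+1} holds for |x| < 1 and every fixed k ≥ 0. -/
section HDAux

open Finset

/-- Coefficients of `e^{-x}/(1-x)^{k+1}`. -/
def cc (k n : ℕ) : ℚ :=
  ∑ i ∈ range (n + 1), (-1 : ℚ) ^ i / (Nat.factorial i : ℚ) * ((n + k - i).choose k : ℚ)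

lemma cc_zero (n : ℕ) : (numDerangements n : ℚ) = (Nat.factorial n : ℚ) * cc 0 n := by
  unfold cc
  rw [show ((numDerangements n : ℚ)) = ((numDerangements n : ℤ) : ℚ) by push_cast; ring,
    numDerangements_sum]
  push_cast
  rw [Finset.mul_sum]
  refine Finset.sum_congr rfl fun i hi => ?_
  have h_le : i ≤ n := Finset.mem_range_succ_iff.mp hi
  have h : (i.factorial : ℚ) * ((i + 1).ascFactorial (n - i) : ℚ) = (n.factorial : ℚ) := by
    rw [← Nat.cast_mul, Nat.factorial_mul_ascFactorial, Nat.add_sub_cancel' h_le]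
  have hi0 : (i.factorial : ℚ) ≠ 0 := Nat.cast_ne_zero.2 i.factorial_ne_zero
  rw [Nat.choose_zero_right]
  push_cast
  field_simp
  linear_combination h

lemma cc_rec (k n : ℕ) :
    ((n : ℚ) + 1) * cc k (n + 1) = ((k : ℚ) + 1) * cc (k + 1) n - cc k n := by
  unfold cc
  rw [Finset.mul_sum]
  have hsplit : ∀ i ∈ range (n + 2),
      ((n : ℚ) + 1) * ((-1 : ℚ) ^ i / (Nat.factorial i : ℚ) * ((n + 1 + k - i).choose k : ℚ))
        = ((n + 1 - i : ℕ) : ℚ) * ((-1 : ℚ) ^ i / (Nat.factorial i : ℚ) * ((n + 1 + k - i).choose k : ℚ))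
          + (i : ℚ) * ((-1 : ℚ) ^ i / (Nat.factorial i : ℚ) * ((n + 1 + k - i).choose k : ℚ)) := by
    intro i hi
    have h_le : i ≤ n + 1 := Finset.mem_range_succ_iff.mp hi
    have : ((n + 1 - i : ℕ) : ℚ) = (n : ℚ) + 1 - i := by
      push_cast [Nat.cast_sub h_le]; ring
    rw [this]; ring
  rw [Finset.sum_congr rfl hsplit, Finset.sum_add_distrib]
  have hP : ∑ i ∈ range (n + 2),
      ((n + 1 - i : ℕ) : ℚ) * ((-1 : ℚ) ^ i / (Nat.factorial i : ℚ) * ((n + 1 + k - i).choose k : ℚ))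
      = ((k : ℚ) + 1) * ∑ i ∈ range (n + 1),
          (-1 : ℚ) ^ i / (Nat.factorial i : ℚ) * ((n + (k + 1) - i).choose (k + 1) : ℚ) := by
    rw [Finset.sum_range_succ, Nat.sub_self, Finset.mul_sum]
    simp only [Nat.cast_zero, zero_mul, add_zero]
    refine Finset.sum_congr rfl fun i hi => ?_
    have h_le : i ≤ n := Finset.mem_range_succ_iff.mp hi
    have hnat : (n + 1 + k - i).choose (k + 1) * (k + 1) = (n + 1 + k - i).choose k * (n + 1 - i) := by
      rw [Nat.choose_succ_right_eq]
      congr 1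
      omega
    have harg : n + (k + 1) - i = n + 1 + k - i := by omega
    have hq : (((n + 1 + k - i).choose (k + 1) : ℚ)) * ((k : ℚ) + 1)
        = ((n + 1 + k - i).choose k : ℚ) * ((n + 1 - i : ℕ) : ℚ) := by
      exact_mod_cast congrArg (Nat.cast : ℕ → ℚ) hnat
    rw [harg]
    linear_combination (-(-1 : ℚ) ^ i / (Nat.factorial i : ℚ)) * hq
  have hQ : ∑ i ∈ range (n + 2),
      (i : ℚ) * ((-1 : ℚ) ^ i / (Nat.factorial i : ℚ) * ((n + 1 + k - i).choose k : ℚ))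
      = - ∑ i ∈ range (n + 1),
          (-1 : ℚ) ^ i / (Nat.factorial i : ℚ) * ((n + k - i).choose k : ℚ) := by
    rw [Finset.sum_range_succ']
    simp only [Nat.cast_zero, zero_mul, add_zero, ← Finset.sum_neg_distrib]
    refine Finset.sum_congr rfl fun i hi => ?_
    have harg : n + 1 + k - (i + 1) = n + k - i := by omega
    have hfac : (Nat.factorial (i + 1) : ℚ) = ((i : ℚ) + 1) * (Nat.factorial i : ℚ) := by
      push_cast [Nat.factorial_succ]; ring
    have hi0 : (Nat.factorial i : ℚ) ≠ 0 := Nat.cast_ne_zero.2 i.factorial_ne_zero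
    rw [harg, hfac, pow_succ]
    field_simp
    push_cast
    ring
  rw [hP, hQ]
  ring

lemma A_eq (k : ℕ) : ∀ n : ℕ,
    (∑ l ∈ range (k + 1), (k.choose l : ℚ) * (numDerangements (n + k - l) : ℚ))
      = (n.factorial : ℚ) * (k.factorial : ℚ) * cc k n := by
  induction k with
  | zero =>
    intro n
    simpa using cc_zero n
  | succ k ih =>
    intro n
    rw [Finset.sum_range_succ']
    have e1 : ∀ l ∈ range (k + 1),
        (((k + 1).choose (l + 1) : ℚ)) * (numDerangements (n + (k + 1) - (l + 1)) : ℚ)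
          = (k.choose l : ℚ) * (numDerangements (n + k - l) : ℚ)
            + (k.choose (l + 1) : ℚ) * (numDerangements (n + k - l) : ℚ) := by
      intro l _
      have h1 : n + (k + 1) - (l + 1) = n + k - l := by omega
      have h2 : ((k + 1).choose (l + 1) : ℚ) = (k.choose l : ℚ) + (k.choose (l + 1) : ℚ) := by
        exact_mod_cast congrArg (Nat.cast : ℕ → ℚ) (Nat.choose_succ_succ k l)
      rw [h1, h2]; ring
    rw [Finset.sum_congr rfl e1, Finset.sum_add_distrib]
    have e2 : (∑ l ∈ range (k + 1), (k.choose (l + 1) : ℚ) * (numDerangements (n + k - l) : ℚ))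
        + ((k + 1).choose 0 : ℚ) * (numDerangements (n + (k + 1) - 0) : ℚ)
        = ∑ l ∈ range (k + 1), (k.choose l : ℚ) * (numDerangements ((n + 1) + k - l) : ℚ) := by
      rw [Finset.sum_range_succ'
        (fun l => (k.choose l : ℚ) * (numDerangements ((n + 1) + k - l) : ℚ)) k,
        Finset.sum_range_succ]
      simp only [Nat.choose_succ_self, Nat.cast_zero, zero_mul, add_zero,
        Nat.choose_zero_right, Nat.cast_one, one_mul]
      congr 1
      · refine Finset.sum_congr rfl fun l _ => ?_
        rw [show (n + 1) + k - (l + 1) = n + k - l from by omega]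
      · rw [show n + (k + 1) - 0 = (n + 1) + k - 0 from by omega]
    rw [add_assoc, e2, ih n, ih (n + 1)]
    have hrec := cc_rec k n
    have hfac : ((n + 1).factorial : ℚ) = ((n : ℚ) + 1) * (n.factorial : ℚ) := by
      push_cast [Nat.factorial_succ]; ring
    have hfac2 : ((k + 1).factorial : ℚ) = ((k : ℚ) + 1) * (k.factorial : ℚ) := by
      push_cast [Nat.factorial_succ]; ring
    rw [hfac, hfac2]
    linear_combination ((n.factorial : ℚ) * (k.factorial : ℚ)) * hrec

lemma cc_hasSum (k : ℕ) (x : ℝ) (hx : |x| < 1) :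
    HasSum (fun n : ℕ => ((cc k n : ℚ) : ℝ) * x ^ n) (Real.exp (-x) / (1 - x) ^ (k + 1)) := by
  have hf : HasSum (fun i : ℕ => (-x) ^ i / (Nat.factorial i : ℝ)) (Real.exp (-x)) := by
    rw [Real.exp_eq_exp_ℝ]
    exact NormedSpace.expSeries_div_hasSum_exp (-x)
  have hg : HasSum (fun m : ℕ => ((m + k).choose k : ℝ) * x ^ m) (1 / (1 - x) ^ (k + 1)) :=
    hasSum_choose_mul_geometric_of_norm_lt_one k (by rwa [Real.norm_eq_abs])
  have hfn : Summable fun i : ℕ => ‖(-x) ^ i / (Nat.factorial i : ℝ)‖ := by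
    have h : HasSum (fun i : ℕ => |x| ^ i / (Nat.factorial i : ℝ)) (Real.exp |x|) := by
      rw [Real.exp_eq_exp_ℝ]
      exact NormedSpace.expSeries_div_hasSum_exp |x|
    refine h.summable.congr fun i => ?_
    rw [Real.norm_eq_abs, abs_div, abs_pow, abs_neg, Nat.abs_cast]
  have hgn : Summable fun m : ℕ => ‖((m + k).choose k : ℝ) * x ^ m‖ := by
    have h := hasSum_choose_mul_geometric_of_norm_lt_one (𝕜 := ℝ) k (r := |x|)
      (by rwa [Real.norm_eq_abs, abs_abs])
    refine h.summable.congr fun m => ?_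
    rw [Real.norm_eq_abs, abs_mul, abs_pow, Nat.abs_cast]
  have H := hasSum_sum_range_mul_of_summable_norm hfn hgn
  rw [hf.tsum_eq, hg.tsum_eq] at H
  have e : (fun n : ℕ => ((cc k n : ℚ) : ℝ) * x ^ n)
      = fun n : ℕ => ∑ i ∈ range (n + 1),
          (-x) ^ i / (Nat.factorial i : ℝ) * (((n - i + k).choose k : ℝ) * x ^ (n - i)) := by
    funext n
    unfold cc
    push_cast
    rw [Finset.sum_mul]
    refine Finset.sum_congr rfl fun i hi => ?_
    have h_le : i ≤ n := Finset.mem_range_succ_iff.mp hi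
    rw [show n + k - i = n - i + k from by omega, neg_pow,
      show x ^ n = x ^ i * x ^ (n - i) from by rw [← pow_add]; congr 1; omega]
    ring
  rw [e]
  convert H using 1
  · rfl
  rw [mul_one_div]

theorem dSum_egf_aux (k : ℕ) (x : ℝ) (hx : |x| < 1)
    (dS : ℕ → ℕ → ℚ)
    (hd : ∀ n k, dS n k = (1 / (Nat.factorial k : ℚ)) *
      ∑ l ∈ Finset.range (k + 1), (Nat.choose k l : ℚ) * (numDerangements (n - l) : ℚ)) :
    HasSum (fun n : ℕ => ((dS (n + k) k : ℚ) : ℝ) / (Nat.factorial n : ℝ) * x ^ n)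
      (Real.exp (-x) / (1 - x) ^ (k + 1)) := by
  refine (cc_hasSum k x hx).congr_fun fun n => ?_
  have hk0 : (k.factorial : ℚ) ≠ 0 := Nat.cast_ne_zero.2 k.factorial_ne_zero
  have hq : dS (n + k) k = (n.factorial : ℚ) * cc k n := by
    rw [hd, A_eq k n]
    field_simp
  have hn0 : ((n.factorial : ℕ) : ℝ) ≠ 0 := Nat.cast_ne_zero.2 n.factorial_ne_zero
  rw [hq]
  push_cast
  field_simp

end HDAux

/-- Higher derangement numbers via the closed form
`dSum n k = (1/k!) ∑_{l=0}^k C(k,l) d_{n-l}`. -/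
def dSum (n k : ℕ) : ℚ :=
  (1 / (Nat.factorial k : ℚ)) *
    ∑ l ∈ Finset.range (k + 1), (Nat.choose k l : ℚ) * (numDerangements (n - l) : ℚ)

theorem dSum_egf (k : ℕ) (x : ℝ) (hx : |x| < 1) :
    HasSum (fun n : ℕ => ((dSum (n + k) k : ℚ) : ℝ) / (Nat.factorial n : ℝ) * x ^ n)
      (Real.exp (-x) / (1 - x) ^ (k + 1)) :=
  dSum_egf_aux k x hx dSum (fun _ _ => rfl)
end

section
/- Define c_j^k = C(k,j) · d_k^j where d_k^j are the higher derangement numbers. Then c_{j+1}^k = (1/(j+1)^2)·((k-j)·c_j^k + k·c_j^{k-1}) for 0 ≤ j < k, with c_0^k = d_k. -/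
/-- Decomposition coefficients `c j k = C(k,j) * d_k^j`. -/
def cCoeff (j k : ℕ) : ℚ := (Nat.choose k j : ℚ) * dSum k j

private def S (j k : ℕ) : ℚ :=
  ∑ l ∈ Finset.range (j + 1), (Nat.choose j l : ℚ) * (numDerangements (k - l) : ℚ)

private lemma S_succ (j k : ℕ) : S (j + 1) k = S j k + S j (k - 1) := by
  unfold S
  rw [Finset.sum_range_succ' (fun l => (Nat.choose (j+1) l : ℚ) * (numDerangements (k - l) : ℚ))]
  have hp : ∀ i ∈ Finset.range (j + 1),
      ((Nat.choose (j+1) (i+1) : ℚ) * (numDerangements (k - (i+1)) : ℚ))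
      = (Nat.choose j i : ℚ) * (numDerangements (k - 1 - i) : ℚ)
        + (Nat.choose j (i+1) : ℚ) * (numDerangements (k - (i+1)) : ℚ) := by
    intro i _
    have hs : k - (i + 1) = k - 1 - i := by omega
    rw [Nat.choose_succ_succ, hs]
    push_cast
    ring
  rw [Finset.sum_congr rfl hp, Finset.sum_add_distrib]
  have h2 : (∑ i ∈ Finset.range (j+1),
      (Nat.choose j (i+1) : ℚ) * (numDerangements (k - (i+1)) : ℚ))
      + (Nat.choose (j+1) 0 : ℚ) * (numDerangements (k - 0) : ℚ)
      = ∑ l ∈ Finset.range (j+2), (Nat.choose j l : ℚ) * (numDerangements (k - l) : ℚ) := by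
    rw [Finset.sum_range_succ' (fun l => (Nat.choose j l : ℚ) * (numDerangements (k - l) : ℚ))]
    simp
  have h3 : (∑ l ∈ Finset.range (j+2), (Nat.choose j l : ℚ) * (numDerangements (k - l) : ℚ))
      = ∑ l ∈ Finset.range (j+1), (Nat.choose j l : ℚ) * (numDerangements (k - l) : ℚ) := by
    rw [Finset.sum_range_succ]
    simp
  linarith [h2, h3]

private lemma dSum_eq (n k : ℕ) : dSum n k = (1 / (Nat.factorial k : ℚ)) * S k n := rfl

theorem cCoeff_recurrence :
    (∀ k : ℕ, cCoeff 0 k = (numDerangements k : ℚ)) ∧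
      ∀ k j : ℕ, j < k →
        cCoeff (j + 1) k =
          (1 / ((j : ℚ) + 1) ^ 2) *
            (((k : ℚ) - (j : ℚ)) * cCoeff j k + (k : ℚ) * cCoeff j (k - 1)) := by
  constructor
  · intro k
    simp [cCoeff, dSum]
  · intro k j hjk
    have h1 : ((k : ℚ) - (j : ℚ)) * (Nat.choose k j : ℚ)
        = ((j : ℚ) + 1) * (Nat.choose k (j+1) : ℚ) := by
      have hc : (Nat.choose k (j+1) : ℚ) * ((j:ℚ)+1)
          = (Nat.choose k j : ℚ) * ((k - j : ℕ) : ℚ) := by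
        exact_mod_cast Nat.choose_succ_right_eq k j
      rw [Nat.cast_sub hjk.le] at hc
      linarith
    have h2 : (k : ℚ) * (Nat.choose (k-1) j : ℚ)
        = ((j : ℚ) + 1) * (Nat.choose k (j+1) : ℚ) := by
      obtain ⟨m, rfl⟩ : ∃ m, k = m + 1 := ⟨k - 1, by omega⟩
      have hc : ((m:ℚ)+1) * (Nat.choose m j : ℚ)
          = (Nat.choose (m+1) (j+1) : ℚ) * ((j:ℚ)+1) := by
        exact_mod_cast Nat.add_one_mul_choose_eq m j
      simp only [Nat.add_sub_cancel]
      push_cast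
      linarith
    have hfac : (Nat.factorial (j+1) : ℚ) = ((j : ℚ) + 1) * (Nat.factorial j : ℚ) := by
      rw [Nat.factorial_succ]; push_cast; ring
    have hj1 : ((j : ℚ) + 1) ≠ 0 := by positivity
    have hfj : (Nat.factorial j : ℚ) ≠ 0 := by
      exact_mod_cast Nat.factorial_ne_zero j
    rw [cCoeff, cCoeff, cCoeff, dSum_eq, dSum_eq, dSum_eq, S_succ, hfac]
    linear_combination (norm := skip) (-(S j k) / (((j:ℚ)+1)^2 * (Nat.factorial j : ℚ))) * h1
      - (S j (k-1) / (((j:ℚ)+1)^2 * (Nat.factorial j : ℚ))) * h2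
    field_simp
    ring
end

section
/- The higher derangement number d_n^k satisfies k!·d_n^k = e_n^k, where e_n^k is the number of permutations σ of {1,...,n} such that σ(i) ≠ i for all i > k. -/
/-- count of permutations with no fixed points at indices ≥ k -/
def cnt (n k : ℕ) : ℕ :=
  (Finset.univ.filter
      (fun σ : Equiv.Perm (Fin n) => ∀ i : Fin n, k ≤ (i : ℕ) → σ i ≠ i)).card

lemma cnt_diag (n : ℕ) : cnt n n = n.factorial := by
  unfold cnt
  rw [Finset.filter_true_of_mem, Finset.card_univ]
  · rw [Fintype.card_perm, Fintype.card_fin]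
  · intro σ _ i hi
    exact absurd hi (by omega)

lemma cnt_rec (m k : ℕ) (hk : k ≤ m) : cnt (m + 1) (k + 1) = cnt (m + 1) k + cnt m k := by
  classical
  set pk : Fin (m + 1) := ⟨k, by omega⟩ with hpk
  set e : Fin (m + 1) ≃ Option (Fin m) := finSuccEquiv' pk with he
  -- split the count of cnt (m+1) (k+1) by whether pk is fixed
  unfold cnt
  rw [← Finset.card_filter_add_card_filter_not
      (p := fun σ : Equiv.Perm (Fin (m + 1)) => σ pk ≠ pk)]
  congr 1
  · -- not fixing pk: same as no fixed point ≥ k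
    rw [Finset.filter_filter]
    apply Finset.card_nbij id
    · intro σ hσ
      simp only [Finset.mem_coe, Finset.mem_filter, Finset.mem_univ, true_and] at hσ ⊢
      obtain ⟨h1, h2⟩ := hσ
      intro i hi
      rcases Nat.lt_or_ge (k : ℕ) (i : ℕ) with h | h
      · exact h1 i h
      · have : i = pk := by
          apply Fin.ext; simp [hpk]; omega
        rw [id, this]; exact h2
    · exact Function.Injective.injOn (fun a b h => h)
    · intro σ hσ
      simp only [Finset.coe_filter, Finset.mem_univ, true_and, Set.mem_setOf_eq,
        Set.mem_image] at hσ ⊢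
      refine ⟨σ, ⟨fun i hi => hσ i (by omega), hσ pk (by simp [hpk])⟩, rfl⟩
  · -- fixing pk: bijection with cnt m k
    rw [Finset.filter_filter]
    symm
    apply Finset.card_bij
      (i := fun τ _ => (e.permCongr.symm) (Equiv.optionCongr τ))
    · -- maps into the target
      intro τ hτ
      simp only [Finset.mem_filter, Finset.mem_univ, true_and] at hτ ⊢
      have hfix : (e.permCongr.symm) (Equiv.optionCongr τ) pk = pk := by
        simp [he, Equiv.permCongr_apply, finSuccEquiv'_at, finSuccEquiv'_symm_none]
      constructor
      · intro j hj
        have hjpk : j ≠ pk := by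
          intro hcon; rw [hcon] at hj; simp [hpk] at hj
        obtain ⟨i, rfl⟩ := Fin.exists_succAbove_eq hjpk
        have happ : (e.permCongr.symm) (Equiv.optionCongr τ) (pk.succAbove i) =
            pk.succAbove (τ i) := by
          simp [he, Equiv.permCongr_apply, finSuccEquiv'_succAbove, finSuccEquiv'_symm_some]
        rw [happ]
        have hik : k ≤ (i : ℕ) := by
          by_contra hcon
          push_neg at hcon
          have : pk.succAbove i = Fin.castSucc i :=
            Fin.succAbove_of_castSucc_lt _ _ (by simp [Fin.lt_def, hpk]; omega)
          rw [this] at hj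
          simp at hj
          omega
        have := hτ i hik
        intro hcon
        rw [Fin.succAbove_right_inj] at hcon
        exact this hcon
      · intro hcon; exact absurd hfix hcon
    · -- injective
      intro τ₁ h₁ τ₂ h₂ hEq
      have := e.permCongr.symm.injective hEq
      exact Equiv.optionCongr_injective this
    · -- surjective
      intro σ hσ
      simp only [Finset.mem_filter, Finset.mem_univ, true_and, not_not] at hσ
      obtain ⟨hP, hfix⟩ := hσ
      have hnone : (e.permCongr σ) none = none := by
        simp [he, Equiv.permCongr_apply, finSuccEquiv'_symm_none, hfix, finSuccEquiv'_at]
      set τ : Equiv.Perm (Fin m) := Equiv.removeNone (e.permCongr σ) with hτ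
      have hsome : ∀ i : Fin m, some (τ i) = (e.permCongr σ) (some i) := by
        intro i
        apply Equiv.removeNone_some
        rcases h : (e.permCongr σ) (some i) with _ | j
        · exfalso
          have := (e.permCongr σ).injective (h.trans hnone.symm)
          simp at this
        · exact ⟨j, rfl⟩
      have happ : ∀ i : Fin m, σ (pk.succAbove i) = pk.succAbove (τ i) := by
        intro i
        have := hsome i
        simp only [he, Equiv.permCongr_apply, finSuccEquiv'_symm_some] at this
        have h2 := congrArg (finSuccEquiv' pk).symm this
        simpa [finSuccEquiv'_symm_some] using h2.symm
      refine ⟨τ, ?_, ?_⟩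
      · simp only [Finset.mem_filter, Finset.mem_univ, true_and]
        intro i hi
        have hival : (pk.succAbove i : ℕ) = (i : ℕ) + 1 := by
          have : pk.succAbove i = i.succ :=
            Fin.succAbove_of_le_castSucc _ _ (by simp [Fin.le_def, hpk]; omega)
          rw [this]; simp
        have := hP (pk.succAbove i) (by omega)
        rw [happ i] at this
        intro hcon
        rw [hcon] at this
        exact this rfl
      · -- e.permCongr.symm (optionCongr τ) = σ
        apply Equiv.ext
        intro x
        rcases eq_or_ne x pk with rfl | hx
        · simp [he, Equiv.permCongr_symm, Equiv.permCongr_apply, Equiv.symm_symm,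
            finSuccEquiv'_at, finSuccEquiv'_symm_none, hfix]
        · obtain ⟨i, rfl⟩ := Fin.exists_succAbove_eq hx
          simp [he, Equiv.permCongr_symm, Equiv.permCongr_apply, Equiv.symm_symm,
            finSuccEquiv'_succAbove, finSuccEquiv'_symm_some, happ i]

lemma eulerE_eq_cnt : ∀ n k : ℕ, k ≤ n → eulerE n k = (cnt n k : ℤ) := by
  have H : ∀ d n k : ℕ, k ≤ n → n - k = d → eulerE n k = (cnt n k : ℤ) := by
    intro d
    induction d with
    | zero =>
      intro n k h1 h2
      have : k = n := by omega
      subst this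
      rw [eulerE, dif_pos le_rfl, cnt_diag]
    | succ d ih =>
      intro n k h1 h2
      have hlt : k < n := by omega
      obtain ⟨m, rfl⟩ : ∃ m, n = m + 1 := ⟨n - 1, by omega⟩
      rw [eulerE, dif_neg (by omega)]
      simp only [Nat.add_sub_cancel]
      rw [ih (m + 1) (k + 1) (by omega) (by omega), ih m k (by omega) (by omega)]
      have := cnt_rec m k (by omega)
      omega
  intro n k h
  exact H (n - k) n k h rfl

theorem eulerE_counts_partial_derangements (n k : ℕ) (hkn : k ≤ n) :
    (Nat.factorial k : ℚ) * dTab n k = (eulerE n k : ℚ) ∧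
      eulerE n k =
        ((Finset.univ.filter
            (fun σ : Equiv.Perm (Fin n) => ∀ i : Fin n, k ≤ (i : ℕ) → σ i ≠ i)).card : ℤ) := by
  constructor
  · rw [dTab]
    have : (Nat.factorial k : ℚ) ≠ 0 := Nat.cast_ne_zero.mpr (Nat.factorial_ne_zero k)
    field_simp
  · exact eulerE_eq_cnt n k hkn
end
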